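/- There does not exist a 3-dimensional linear subspace B of the imaginary split octonions Im O' on which multiplication is totally degenerate, i.e. such that x·y = 0 for all x, y ∈ B. -/
import Mathlib


open Matrix

noncomputable section

/-- The split octonions in the Zorn vector-matrix model: quadruples `(a, v, w, b)` with
`a, b ∈ ℝ` and `v, w ∈ ℝ³`. -/
abbrev Oc := ℝ × (Fin 3 → ℝ) × (Fin 3 → ℝ) × ℝ

/-- The scalar components and vector components of a Zorn vector matrix. -/
def oA (x : Oc) : ℝ := x.1
def oV (x : Oc) : Fin 3 → ℝ := x.2.1
def oW (x : Oc) : Fin 3 → ℝ := x.2.2.1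
def oB (x : Oc) : ℝ := x.2.2.2

/-- Zorn vector-matrix multiplication:
`(a,v,w,b)·(a',v',w',b') = (aa' + v⋅w', av' + b'v + w×w', a'w + bw' − v×v', bb' + v'⋅w)`. -/
def oMul (x y : Oc) : Oc :=
  (oA x * oA y + oV x ⬝ᵥ oW y,
   oA x • oV y + oB y • oV x + crossProduct (oW x) (oW y),
   oA y • oW x + oB x • oW y - crossProduct (oV x) (oV y),
   oB x * oB y + oV y ⬝ᵥ oW x)

/-- The multiplicative unit `1 = (1,0,0,1)`. -/
def oOne : Oc := (1, 0, 0, 1)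

/-- The norm `N(a,v,w,b) = ab − v⋅w`. -/
def oN (x : Oc) : ℝ := oA x * oB x - oV x ⬝ᵥ oW x

/-- The conjugation `(a,v,w,b)̄ = (b,−v,−w,a)`. -/
def oConj (x : Oc) : Oc := (oB x, -oV x, -oW x, oA x)

/-- The polar form `⟨x,y⟩ = (N(x+y) − N(x) − N(y))/2` of `N`. -/
def oInner (x y : Oc) : ℝ := (oN (x + y) - oN x - oN y) / 2

/-- The imaginary split octonions `Im O' = {x : x̄ = −x}`, a 7-dimensional subspace. -/
def ImO : Submodule ℝ Oc where
  carrier := {x | oConj x = -x}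
  add_mem' := by
    intro x y hx hy
    simp only [Set.mem_setOf_eq, oConj, oA, oV, oW, oB, Prod.ext_iff, Prod.fst_add,
      Prod.snd_add, Prod.fst_neg, Prod.snd_neg, neg_add] at *
    exact ⟨by rw [hx.1, hy.1], trivial, trivial, by rw [hx.2.2.2, hy.2.2.2]⟩
  zero_mem' := by
    simp [oConj, oA, oV, oW, oB, Prod.ext_iff]
  smul_mem' := by
    intro c x hx
    simp only [Set.mem_setOf_eq, oConj, oA, oV, oW, oB, Prod.ext_iff, Prod.smul_fst,
      Prod.smul_snd, Prod.fst_neg, Prod.snd_neg, smul_neg] at *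
    exact ⟨by rw [hx.1, smul_neg], trivial, trivial, by rw [hx.2.2.2, smul_neg]⟩

/-- A unital `ℝ`-algebra automorphism of the split octonions. -/
def IsOAuto (φ : Oc ≃ₗ[ℝ] Oc) : Prop :=
  (∀ x y : Oc, φ (oMul x y) = oMul (φ x) (φ y)) ∧ φ oOne = oOne

lemma cross_para {v w : Fin 3 → ℝ} (h : crossProduct v w = 0) (hv : v ≠ 0) :
    ∃ c : ℝ, w = c • v := by
  obtain ⟨i, hi⟩ := Function.ne_iff.mp hv
  simp only [Pi.zero_apply] at hi
  have h0 := congrFun h 0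
  have h1 := congrFun h 1
  have h2 := congrFun h 2
  simp only [cross_apply, Pi.zero_apply, Matrix.cons_val_zero, Matrix.cons_val_one,
    Matrix.head_cons, Matrix.cons_val_two, Matrix.tail_cons, sub_eq_zero] at h0 h1 h2
  refine ⟨w i / v i, ?_⟩
  funext j
  have e2 : (⟨2, by norm_num⟩ : Fin 3) = 2 := rfl
  have e1 : (⟨1, by norm_num⟩ : Fin 3) = 1 := rfl
  have e0 : (⟨0, by norm_num⟩ : Fin 3) = 0 := rfl
  fin_cases i <;> fin_cases j <;>
    simp only [Pi.smul_apply, smul_eq_mul, e0, e1, e2] at hi ⊢ <;>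
    rw [div_mul_eq_mul_div, eq_div_iff hi] <;> linarith

lemma rank_range_le_one {M : Type*} [AddCommGroup M] [Module ℝ M]
    (f : M →ₗ[ℝ] (Fin 3 → ℝ))
    (hpar : ∀ x y : M, crossProduct (f x) (f y) = 0) :
    Module.finrank ℝ (LinearMap.range f) ≤ 1 := by
  by_cases hz : ∀ x : M, f x = 0
  · have : LinearMap.range f = ⊥ := by
      rw [LinearMap.range_eq_bot]; ext x; simp [hz x]
    rw [this]; simp
  · push_neg at hz
    obtain ⟨x₀, hx₀⟩ := hz
    have hle : LinearMap.range f ≤ Submodule.span ℝ {f x₀} := by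
      rintro _ ⟨x, rfl⟩
      obtain ⟨c, hc⟩ := cross_para (hpar x₀ x) hx₀
      rw [hc]
      exact Submodule.smul_mem _ _ (Submodule.mem_span_singleton_self _)
    calc Module.finrank ℝ (LinearMap.range f)
        ≤ Module.finrank ℝ (Submodule.span ℝ {f x₀}) := Submodule.finrank_mono hle
      _ = 1 := finrank_span_singleton hx₀

set_option maxHeartbeats 1000000 in
set_option synthInstance.maxHeartbeats 400000 in
/-- Rank–nullity step for a submodule cut down by the kernel of a linear map. -/
lemma rank_step {N : Type*} [AddCommGroup N] [Module ℝ N]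
    (K : Submodule ℝ Oc) (f : Oc →ₗ[ℝ] N) :
    Module.finrank ℝ K ≤ Module.finrank ℝ (LinearMap.range (f.comp K.subtype)) +
      Module.finrank ℝ ↥(LinearMap.ker f ⊓ K) := by
  have hrn := LinearMap.finrank_range_add_finrank_ker (f.comp K.subtype)
  have hker : LinearMap.ker (f.comp K.subtype) =
      Submodule.comap K.subtype (LinearMap.ker f ⊓ K) := by
    rw [LinearMap.ker_comp]
    ext x
    simp [x.2]
  have heq : Module.finrank ℝ ↥(Submodule.comap K.subtype (LinearMap.ker f ⊓ K)) =
      Module.finrank ℝ ↥(LinearMap.ker f ⊓ K) :=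
    LinearEquiv.finrank_eq (Submodule.comapSubtypeEquivOfLe inf_le_right)
  rw [hker, heq] at hrn
  omega

/-- There is no 3-dimensional subspace of the imaginary split octonions on which the
multiplication is totally degenerate. -/
theorem statement12 :
    ¬∃ B : Submodule ℝ Oc, B ≤ ImO ∧ Module.finrank ℝ B = 3 ∧
      ∀ x ∈ B, ∀ y ∈ B, oMul x y = 0 := by
  rintro ⟨B, hBI, hdim, hmul⟩
  -- basic component facts
  have hb : ∀ x ∈ B, oB x = - oA x := by
    intro x hx
    have h' : oConj x = -x := hBI hx
    simpa [oConj, oB, oA] using congrArg Prod.fst h'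
  have hc2 : ∀ x ∈ B, ∀ y ∈ B,
      oA x • oV y + oB y • oV x + crossProduct (oW x) (oW y) = 0 := by
    intro x hx y hy
    simpa [oMul] using congrArg (fun p : Oc => p.2.1) (hmul x hx y hy)
  have hc3 : ∀ x ∈ B, ∀ y ∈ B,
      oA y • oW x + oB x • oW y - crossProduct (oV x) (oV y) = 0 := by
    intro x hx y hy
    simpa [oMul] using congrArg (fun p : Oc => p.2.2.1) (hmul x hx y hy)
  -- linear maps of components
  let fA : Oc →ₗ[ℝ] ℝ := LinearMap.fst ℝ ℝ _
  let fV : Oc →ₗ[ℝ] (Fin 3 → ℝ) := (LinearMap.fst ℝ _ _).comp (LinearMap.snd ℝ ℝ _)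
  let fW : Oc →ₗ[ℝ] (Fin 3 → ℝ) :=
    (LinearMap.fst ℝ _ _).comp ((LinearMap.snd ℝ _ _).comp (LinearMap.snd ℝ ℝ _))
  have hfA : ∀ x : Oc, fA x = oA x := fun _ => rfl
  have hfV : ∀ x : Oc, fV x = oV x := fun _ => rfl
  have hfW : ∀ x : Oc, fW x = oW x := fun _ => rfl
  -- K1 : elements of B with vanishing first scalar component
  set K1 : Submodule ℝ Oc := LinearMap.ker fA ⊓ B with hK1def
  have hK1mem : ∀ x ∈ K1, x ∈ B ∧ oA x = 0 := by
    intro x hx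
    rw [hK1def, Submodule.mem_inf] at hx
    exact ⟨hx.2, hx.1⟩
  have hK1rk : 2 ≤ Module.finrank ℝ K1 := by
    have hs := rank_step B fA
    have hr1 : Module.finrank ℝ (LinearMap.range (fA.comp B.subtype)) ≤ 1 := by
      simpa using Submodule.finrank_le (LinearMap.range (fA.comp B.subtype))
    rw [hdim, show LinearMap.ker fA ⊓ B = K1 from rfl] at hs
    omega
  -- pairs in K1 have parallel `v` components
  have hg2par : ∀ u v : ↥K1, crossProduct ((fV.comp K1.subtype) u) ((fV.comp K1.subtype) v) = 0 := by
    intro u v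
    obtain ⟨hmu, hau⟩ := hK1mem _ u.2
    obtain ⟨hmv, hav⟩ := hK1mem _ v.2
    have h3 := hc3 _ hmu _ hmv
    have hbu : oB (u : Oc) = 0 := by rw [hb _ hmu, hau, neg_zero]
    rw [hav, hbu, zero_smul, zero_smul, zero_add, zero_sub, neg_eq_zero] at h3
    exact h3
  -- K2 : additionally vanishing v component
  set K2 : Submodule ℝ Oc := LinearMap.ker fV ⊓ K1 with hK2def
  have hK2mem : ∀ x ∈ K2, x ∈ B ∧ oA x = 0 ∧ oV x = 0 := by
    intro x hx
    rw [hK2def, Submodule.mem_inf] at hx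
    exact ⟨(hK1mem _ hx.2).1, (hK1mem _ hx.2).2, hx.1⟩
  have hK2rk : Module.finrank ℝ K1 ≤ Module.finrank ℝ K2 + 1 := by
    have hs := rank_step K1 fV
    have hr1 := rank_range_le_one (fV.comp K1.subtype) hg2par
    rw [show LinearMap.ker fV ⊓ K1 = K2 from rfl] at hs
    omega
  by_cases hA : ∀ x ∈ B, oA x = 0
  · -- Case A : the first scalar component vanishes identically on B
    have hK1eq : K1 = B := by
      rw [hK1def, inf_eq_right]
      intro x hx
      exact LinearMap.mem_ker.mpr (hA x hx)
    have hK1rk3 : Module.finrank ℝ K1 = 3 := by rw [hK1eq, hdim]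
    -- pairs in K2 (indeed in K1) have parallel `w` components
    have hg3par : ∀ u v : ↥K2,
        crossProduct ((fW.comp K2.subtype) u) ((fW.comp K2.subtype) v) = 0 := by
      intro u v
      obtain ⟨hmu, hau, -⟩ := hK2mem _ u.2
      obtain ⟨hmv, hav, -⟩ := hK2mem _ v.2
      have h2 := hc2 _ hmu _ hmv
      have hbv : oB (v : Oc) = 0 := by rw [hb _ hmv, hav, neg_zero]
      rw [hau, hbv, zero_smul, zero_smul, zero_add, zero_add] at h2
      exact h2
    -- K3 : additionally vanishing w component; it is nonzero yet everything in it is zero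
    have hK3rk : 1 ≤ Module.finrank ℝ ↥(LinearMap.ker fW ⊓ K2) := by
      have hs := rank_step K2 fW
      have hr1 := rank_range_le_one (fW.comp K2.subtype) hg3par
      omega
    have hK3ne : LinearMap.ker fW ⊓ K2 ≠ ⊥ := by
      intro hbot
      rw [hbot] at hK3rk
      simp at hK3rk
    obtain ⟨y, hy, hyne⟩ := Submodule.exists_mem_ne_zero_of_ne_bot hK3ne
    rw [Submodule.mem_inf] at hy
    obtain ⟨hmy, hay, hvy⟩ := hK2mem _ hy.2
    have hwy : oW y = 0 := hy.1
    have hby : oB y = 0 := by rw [hb _ hmy, hay, neg_zero]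
    exact hyne (Prod.ext hay (Prod.ext hvy (Prod.ext hwy hby)))
  · -- Case B : some element of B has nonzero first scalar component
    push_neg at hA
    obtain ⟨x, hx, hax⟩ := hA
    have hK2ne : K2 ≠ ⊥ := by
      intro hbot
      rw [hbot] at hK2rk
      rw [finrank_bot] at hK2rk
      omega
    obtain ⟨y, hy, hyne⟩ := Submodule.exists_mem_ne_zero_of_ne_bot hK2ne
    obtain ⟨hmy, hay, hvy⟩ := hK2mem _ hy
    -- the third component of x * y forces the w component of y to vanish
    have h3 := hc3 _ hx _ hmy
    rw [hay, hvy, zero_smul, zero_add, map_zero, sub_zero, hb _ hx] at h3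
    have hwy : oW y = 0 := by
      rcases smul_eq_zero.mp h3 with h | h
      · exact absurd (neg_eq_zero.mp h) hax
      · exact h
    have hby : oB y = 0 := by rw [hb _ hmy, hay, neg_zero]
    exact hyne (Prod.ext hay (Prod.ext hvy (Prod.ext hwy hby)))

end
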